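/- Let k ≥ 2 and n ≥ 1. Every bimachine B = (A_L, A_R, ψ) over Σ_k = {1,...,2k} that represents the partial function f_n^{(k)} has at least k^n + 1 states in total, i.e., |Q_L| + |Q_R| ≥ k^n + 1. -/

import Mathlib

/-- The full alphabet `Σ_k = {1, …, 2k}` (letters are natural numbers). -/
def SigmaFull (k : ℕ) : Set ℕ := {a | 1 ≤ a ∧ a ≤ 2 * k}

/-- The lower half alphabet `Σ'_k = {1, …, k}`. -/
def SigmaLo (k : ℕ) : Set ℕ := {a | 1 ≤ a ∧ a ≤ k}

/-- The upper half alphabet `Σ''_k = {k+1, …, 2k}`. -/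
def SigmaHi (k : ℕ) : Set ℕ := {a | k + 1 ≤ a ∧ a ≤ 2 * k}

/-- Words over a subalphabet `S`. -/
def Words (S : Set ℕ) : Set (List ℕ) := {w | ∀ a ∈ w, a ∈ S}

/-- The language `L^{(i,j)}_n = (Σ'_k)* · i · (Σ'_k)^{n-1} · (Σ''_k)^{n-1} · j · (Σ''_k)*`. -/
def Lang (k n i j : ℕ) : Set (List ℕ) :=
  {w | ∃ u x y v : List ℕ, u ∈ Words (SigmaLo k) ∧ x ∈ Words (SigmaLo k) ∧
    x.length = n - 1 ∧ y ∈ Words (SigmaHi k) ∧ y.length = n - 1 ∧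
    v ∈ Words (SigmaHi k) ∧ w = u ++ [i] ++ x ++ y ++ [j] ++ v}

/-- The graph of the partial function `f_n^{(k)}`: it maps `α` to the two-letter
word `ji` whenever `α ∈ L^{(i,j)}_n` for some `1 ≤ i ≤ k` and `k+1 ≤ j ≤ 2k`. -/
def fGraph (k n : ℕ) (α ω : List ℕ) : Prop :=
  ∃ i j : ℕ, 1 ≤ i ∧ i ≤ k ∧ k + 1 ≤ j ∧ j ≤ 2 * k ∧ α ∈ Lang k n i j ∧ ω = [j, i]

/-- The domain of the partial function `f_n^{(k)}`. -/
def fDom (k n : ℕ) (α : List ℕ) : Prop := ∃ ω, fGraph k n α ω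

/-- A bimachine over the alphabet of natural numbers, with word output:
two deterministic automata (all states final) and an output function `ψ`. -/
structure Bimachine (QL QR : Type) where
  sL : QL
  δL : QL → ℕ → QL
  sR : QR
  δR : QR → ℕ → QR
  ψ : QL → ℕ → QR → Option (List ℕ)

/-- The extended transition function `δ*` of a deterministic automaton. -/
def dstar {Q : Type} (δ : Q → ℕ → Q) (q : Q) (w : List ℕ) : Q := w.foldl δ q

/-- Auxiliary form of the generalized output function, by recursion on the
reversed input word: `ψ*(l, ε, r) = ε` and
`ψ*(l, tσ, r) = ψ*(l, t, δ_R(r, σ)) · ψ(δ_L*(l, t), σ, r)`. -/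
def psiStarRev {QL QR : Type} (B : Bimachine QL QR) (l : QL) :
    List ℕ → QR → Option (List ℕ)
  | [], _ => some []
  | σ :: s, r => do
      let o₁ ← psiStarRev B l s (B.δR r σ)
      let o₂ ← B.ψ (dstar B.δL l s.reverse) σ r
      return o₁ ++ o₂

/-- The generalized output function `ψ*` of a bimachine (a partial function,
modelled via `Option`). -/
def psiStar {QL QR : Type} (B : Bimachine QL QR) (l : QL) (t : List ℕ) (r : QR) :
    Option (List ℕ) :=
  psiStarRev B l t.reverse r

/-- A bimachine `B` represents the partial function `f_n^{(k)}`: for every word `w`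
over `Σ_k`, the generalized output `ψ*(s_L, w, s_R)` is defined exactly when `w` is
in the domain of `f_n^{(k)}`, and it agrees with `f_n^{(k)}` wherever defined. -/
def Represents {QL QR : Type} (B : Bimachine QL QR) (k n : ℕ) : Prop :=
  ∀ w : List ℕ, w ∈ Words (SigmaFull k) →
    ((psiStar B B.sL w B.sR).isSome ↔ fDom k n w) ∧
    (∀ ω : List ℕ, fGraph k n w ω → psiStar B B.sL w B.sR = some ω)

/-! ### Auxiliary lemmas -/

lemma dstar_append {Q : Type} (δ : Q → ℕ → Q) (q : Q) (a b : List ℕ) :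
    dstar δ q (a ++ b) = dstar δ (dstar δ q a) b := List.foldl_append

lemma psiStarRev_append {QL QR : Type} (B : Bimachine QL QR) (l : QL) (c d : List ℕ) (r : QR) :
    psiStarRev B l (c ++ d) r =
      (psiStarRev B l d (dstar B.δR r c)).bind (fun o₁ =>
        (psiStarRev B (dstar B.δL l d.reverse) c r).bind (fun o₂ => some (o₁ ++ o₂))) := by
  induction c generalizing r with
  | nil =>
      simp only [List.nil_append, psiStarRev]
      have h0 : dstar B.δR r ([] : List ℕ) = r := rfl
      rw [h0]
      cases psiStarRev B l d r <;> simp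
  | cons σ c ih =>
      show psiStarRev B l (σ :: (c ++ d)) r = _
      simp only [psiStarRev, ih, List.reverse_append, dstar_append]
      have : dstar B.δR r (σ :: c) = dstar B.δR (B.δR r σ) c := rfl
      rw [this]
      cases psiStarRev B l d (dstar B.δR (B.δR r σ) c) <;>
        cases psiStarRev B (dstar B.δL l d.reverse) c (B.δR r σ) <;>
        cases B.ψ (dstar B.δL (dstar B.δL l d.reverse) c.reverse) σ r <;>
        simp [List.append_assoc]

lemma psiStar_append {QL QR : Type} (B : Bimachine QL QR) (l : QL) (a b : List ℕ) (r : QR) :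
    psiStar B l (a ++ b) r =
      (psiStar B l a (dstar B.δR r b.reverse)).bind (fun o₁ =>
        (psiStar B (dstar B.δL l a) b r).bind (fun o₂ => some (o₁ ++ o₂))) := by
  unfold psiStar
  rw [List.reverse_append, psiStarRev_append]
  simp

lemma fGraph_mk (k n : ℕ) (hk : 1 ≤ k) (x y : List ℕ) (m p : ℕ)
    (hm : m < n) (hp : p < n)
    (hxlen : x.length = n) (hylen : y.length = n)
    (hx : x ∈ Words (SigmaLo k)) (hy : y ∈ Words (SigmaHi k)) :
    fGraph k n ((x ++ List.replicate m 1) ++ (List.replicate (n-1-p) (k+1) ++ y))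
      [y[p]'(by omega), x[m]'(by omega)] := by
  have hmx : m < x.length := by omega
  have hpy : p < y.length := by omega
  refine ⟨x[m], y[p], ?_, ?_, ?_, ?_, ?_, rfl⟩
  · exact (hx _ (List.getElem_mem hmx)).1
  · exact (hx _ (List.getElem_mem hmx)).2
  · exact (hy _ (List.getElem_mem hpy)).1
  · exact (hy _ (List.getElem_mem hpy)).2
  refine ⟨x.take m, x.drop (m+1) ++ List.replicate m 1,
    List.replicate (n-1-p) (k+1) ++ y.take p, y.drop (p+1), ?_, ?_, ?_, ?_, ?_, ?_, ?_⟩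
  · exact fun a ha => hx a (List.take_subset m x ha)
  · rintro a ha
    rcases List.mem_append.mp ha with h | h
    · exact hx a (List.drop_subset _ x h)
    · rcases List.eq_of_mem_replicate h with rfl; exact ⟨le_refl 1, hk⟩
  · simp; omega
  · rintro a ha
    rcases List.mem_append.mp ha with h | h
    · rcases List.eq_of_mem_replicate h with rfl; exact ⟨le_refl _, by omega⟩
    · exact hy a (List.take_subset p y h)
  · simp; omega
  · exact fun a ha => hy a (List.drop_subset _ y ha)
  · have ex : x = x.take m ++ x[m] :: x.drop (m+1) := by
      rw [← List.drop_eq_getElem_cons hmx, List.take_append_drop]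
    have ey : y = y.take p ++ y[p] :: y.drop (p+1) := by
      rw [← List.drop_eq_getElem_cons hpy, List.take_append_drop]
    conv_lhs => rw [ex, ey]
    simp only [List.append_assoc, List.cons_append, List.nil_append]

lemma contra_lemma (a a' g g' : List ℕ) (jy jy' ix ix' : ℕ)
    (hix : ix ≠ ix') (hjy : jy ≠ jy')
    (e1 : a ++ g = [jy, ix]) (e2 : a' ++ g = [jy, ix'])
    (e3 : a ++ g' = [jy', ix]) : False := by
  have hg : g = [] := by
    cases g with
    | nil => rfl
    | cons c cs =>
      have h1 : (a ++ c :: cs).getLast? = some ix := by rw [e1]; rfl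
      have h2 : (a' ++ c :: cs).getLast? = some ix' := by rw [e2]; rfl
      rw [List.getLast?_append_cons] at h1 h2
      exact (hix (Option.some.inj (h1.symm.trans h2))).elim
  subst hg
  simp only [List.append_nil] at e1
  subst e1
  cases g' with
  | nil => simp at e3; exact hjy e3
  | cons c cs => have h := congrArg List.length e3; simp at h

lemma words_append {S : Set ℕ} {u v : List ℕ} (hu : u ∈ Words S) (hv : v ∈ Words S) :
    u ++ v ∈ Words S := by
  intro a ha
  rcases List.mem_append.mp ha with h | h
  · exact hu a h
  · exact hv a h

/-- Every bimachine representing `f_n^{(k)}` (for `k ≥ 2`, `n ≥ 1`) has at least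
`k^n + 1` states in total. -/
theorem bimachine_lower_bound_total (k n : ℕ) (hk : 2 ≤ k) (hn : 1 ≤ n)
    (QL QR : Type) [Fintype QL] [Fintype QR]
    (B : Bimachine QL QR) (hB : Represents B k n) :
    k ^ n + 1 ≤ Fintype.card QL + Fintype.card QR := by
  by_contra hlt
  push_neg at hlt
  have hk1 : 1 ≤ k := by omega
  have hQL : 0 < Fintype.card QL := Fintype.card_pos_iff.mpr ⟨B.sL⟩
  have hQR : 0 < Fintype.card QR := Fintype.card_pos_iff.mpr ⟨B.sR⟩
  have hcard : Fintype.card (Fin n → Fin k) = k ^ n := by simp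
  have hL : Fintype.card QL < Fintype.card (Fin n → Fin k) := by rw [hcard]; omega
  have hR : Fintype.card QR < Fintype.card (Fin n → Fin k) := by rw [hcard]; omega
  obtain ⟨f, g, hfg, hPL⟩ := Fintype.exists_ne_map_eq_of_card_lt
    (fun f : Fin n → Fin k => dstar B.δL B.sL (List.ofFn fun t => ((f t : ℕ) + 1))) hL
  obtain ⟨F, G, hFG, hPR⟩ := Fintype.exists_ne_map_eq_of_card_lt
    (fun f : Fin n → Fin k =>
      dstar B.δR B.sR (List.ofFn fun t => ((f t : ℕ) + k + 1)).reverse) hR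
  obtain ⟨m, hm⟩ := Function.ne_iff.mp hfg
  obtain ⟨p, hp⟩ := Function.ne_iff.mp hFG
  set x : List ℕ := List.ofFn fun t => ((f t : ℕ) + 1) with hxdef
  set x' : List ℕ := List.ofFn fun t => ((g t : ℕ) + 1) with hx'def
  set y : List ℕ := List.ofFn fun t => ((F t : ℕ) + k + 1) with hydef
  set y' : List ℕ := List.ofFn fun t => ((G t : ℕ) + k + 1) with hy'def
  have hxlen : x.length = n := by simp [hxdef]
  have hx'len : x'.length = n := by simp [hx'def]
  have hylen : y.length = n := by simp [hydef]
  have hy'len : y'.length = n := by simp [hy'def]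
  have hxW : x ∈ Words (SigmaLo k) := by
    intro a ha
    rw [hxdef, List.mem_ofFn] at ha
    obtain ⟨t, rfl⟩ := ha
    have := (f t).isLt
    exact ⟨by simp, by simp⟩
  have hx'W : x' ∈ Words (SigmaLo k) := by
    intro a ha
    rw [hx'def, List.mem_ofFn] at ha
    obtain ⟨t, rfl⟩ := ha
    have := (g t).isLt
    exact ⟨by simp, by simp⟩
  have hyW : y ∈ Words (SigmaHi k) := by
    intro a ha
    rw [hydef, List.mem_ofFn] at ha
    obtain ⟨t, rfl⟩ := ha
    have := (F t).isLt
    exact ⟨by simp, by simp; omega⟩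
  have hy'W : y' ∈ Words (SigmaHi k) := by
    intro a ha
    rw [hy'def, List.mem_ofFn] at ha
    obtain ⟨t, rfl⟩ := ha
    have := (G t).isLt
    exact ⟨by simp, by simp; omega⟩
  -- the padding words
  set Z : List ℕ := List.replicate (m : ℕ) 1 with hZdef
  set Z' : List ℕ := List.replicate (n - 1 - (p : ℕ)) (k + 1) with hZ'def
  have hZW : Z ∈ Words (SigmaLo k) := by
    intro a ha
    rcases List.eq_of_mem_replicate ha with rfl
    exact ⟨le_refl 1, hk1⟩
  have hZ'W : Z' ∈ Words (SigmaHi k) := by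
    intro a ha
    rcases List.eq_of_mem_replicate ha with rfl
    exact ⟨le_refl _, by omega⟩
  have hLoFull : ∀ w : List ℕ, w ∈ Words (SigmaLo k) → w ∈ Words (SigmaFull k) :=
    fun w hw a ha => ⟨(hw a ha).1, by have := (hw a ha).2; omega⟩
  have hHiFull : ∀ w : List ℕ, w ∈ Words (SigmaHi k) → w ∈ Words (SigmaFull k) :=
    fun w hw a ha => ⟨by have := (hw a ha).1; omega, (hw a ha).2⟩
  -- the four outputs
  have houts : ∀ (a b : List ℕ) (hal : a.length = n) (hbl : b.length = n),
      a ∈ Words (SigmaLo k) → b ∈ Words (SigmaHi k) →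
      psiStar B B.sL ((a ++ Z) ++ (Z' ++ b)) B.sR =
        some [b[(p : ℕ)]'(by rw [hbl]; exact p.isLt), a[(m : ℕ)]'(by rw [hal]; exact m.isLt)] := by
    intro a b hal hbl haW hbW
    have hw : (a ++ Z) ++ (Z' ++ b) ∈ Words (SigmaFull k) :=
      words_append (hLoFull _ (words_append haW hZW))
        (hHiFull _ (words_append hZ'W hbW))
    exact (hB _ hw).2 _ (fGraph_mk k n hk1 a b (m : ℕ) (p : ℕ) m.isLt p.isLt hal hbl haW hbW)
  have e1 := houts x y hxlen hylen hxW hyW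
  have e2 := houts x' y hx'len hylen hx'W hyW
  have e3 := houts x y' hxlen hy'len hxW hy'W
  -- split the outputs at the boundary
  rw [psiStar_append] at e1 e2 e3
  -- common states
  have hrho : dstar B.δR B.sR (Z' ++ y').reverse = dstar B.δR B.sR (Z' ++ y).reverse := by
    rw [List.reverse_append, List.reverse_append, dstar_append, dstar_append, hPR]
  have hlam : dstar B.δL B.sL (x' ++ Z) = dstar B.δL B.sL (x ++ Z) := by
    rw [dstar_append, dstar_append, hPL]
  rw [hrho] at e3
  rw [hlam] at e2
  simp only [Option.bind_eq_some_iff, Option.some.injEq] at e1 e2 e3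
  obtain ⟨α, hAx, γ, hCy, h1⟩ := e1
  obtain ⟨α', hAx', γ₂, hCy₂, h2⟩ := e2
  obtain ⟨α₃, hAx₃, γ', hCy', h3⟩ := e3
  have hγ : γ₂ = γ := Option.some.inj (hCy₂.symm.trans hCy)
  have hα : α₃ = α := Option.some.inj (hAx₃.symm.trans hAx)
  subst hγ hα
  -- the distinguished letters differ
  have hix : x[(m : ℕ)]'(by rw [hxlen]; exact m.isLt) ≠
      x'[(m : ℕ)]'(by rw [hx'len]; exact m.isLt) := by
    simp only [hxdef, hx'def, List.getElem_ofFn, Fin.eta]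
    intro h
    exact hm (Fin.ext (by omega))
  have hjy : y[(p : ℕ)]'(by rw [hylen]; exact p.isLt) ≠
      y'[(p : ℕ)]'(by rw [hy'len]; exact p.isLt) := by
    simp only [hydef, hy'def, List.getElem_ofFn, Fin.eta]
    intro h
    exact hp (Fin.ext (by omega))
  exact contra_lemma _ _ _ _ _ _ _ _ hix hjy h1 h2 h3
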